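/- Let T_C be a complete binary tree of depth D ≥ 1, and T an internal tree of T_C with at least 2 leaves. Then consecutive leaves of T form successive leaf transitions: for each 1 ≤ n < |L(T)|, the pair (L_n(T), L_{n+1}(T)) lies in S(T_C), where the leftmost leaf L_1(T) lies in B_l(T_C) and the last leaf lies in B_r(T_C). Conversely, any path of N-1 transitions in S(T_C) starting at a vertex in B_l(T_C) and ending at a vertex in B_r(T_C) visits exactly the leaves, in order, of some internal tree of T_C with N leaves. -/

import Mathlib

/-- Full binary trees: every vertex has 0 or 2 children. -/
inductive FBT where
  | leaf : FBT
  | node : FBT → FBT → FBT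
deriving DecidableEq

namespace FBT

/-- Depth of a full binary tree. -/
def depth : FBT → ℕ
  | leaf => 0
  | node a b => max a.depth b.depth + 1

/-- Positions (reversed root-paths: head is the edge nearest the vertex) of the
leaves of `T`, in left-to-right order. -/
def leaves : FBT → List (List Bool)
  | leaf => [[]]
  | node a b => a.leaves.map (· ++ [false]) ++ b.leaves.map (· ++ [true])

/-- Total number of vertices. -/
def numNodes : FBT → ℕ
  | leaf => 1
  | node a b => a.numNodes + b.numNodes + 1

/-- Number of internal (non-leaf) vertices. -/
def internals : FBT → ℕ
  | leaf => 0
  | node a b => a.internals + b.internals + 1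

/-- The recursive probability function π of the stick-breaking prior:
`pi l T pos` where `pos` is the (reversed) position of the root of `T`. -/
def pi (l : List Bool → ℝ) : FBT → List Bool → ℝ
  | leaf, pos => l pos
  | node a b, pos => (1 - l pos) * pi l a (false :: pos) * pi l b (true :: pos)

/-- Probability of an internal tree: `p(T) = π(root)`. -/
def pTree (l : List Bool → ℝ) (T : FBT) : ℝ := pi l T []

/-- The memoized value m̃, with `m̃(parent(root)) = 1`. -/
noncomputable def mt (l : List Bool → ℝ) : List Bool → ℝ
  | [] => 1 - l []
  | (b :: p) => Real.sqrt (mt l p) * (1 - l (b :: p))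

/-- The memoized value m at a vertex: `m(v) = m̃(parent v)^(1/2) · l v`. -/
noncomputable def mleaf (l : List Bool → ℝ) : List Bool → ℝ
  | [] => l []
  | (b :: p) => Real.sqrt (mt l p) * l (b :: p)

/-- `m̃(parent v)`, with the convention `m̃(parent root) = 1`. -/
noncomputable def mparent (l : List Bool → ℝ) : List Bool → ℝ
  | [] => 1
  | (_ :: p) => mt l p

/-- The set of internal trees of the complete binary tree of depth `D`,
i.e. full binary trees of depth at most `D`. -/
def trees : ℕ → Finset FBT
  | 0 => {leaf}
  | (D+1) => insert leaf ((trees D ×ˢ trees D).image (fun p => node p.1 p.2))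

/-- Consecutive-leaf pairs of a single tree. -/
def transitions (T : FBT) : Finset (List Bool × List Bool) :=
  (T.leaves.zip T.leaves.tail).toFinset

/-- The set `S(T_C)` of successive leaf transitions of the complete binary
tree of depth `D`. -/
def S (D : ℕ) : Finset (List Bool × List Bool) := (trees D).biUnion transitions

/-- The left boundary of the complete binary tree of depth `D`. -/
def Bl (D : ℕ) : Finset (List Bool) :=
  (Finset.range (D+1)).image (fun k => List.replicate k false)

/-- The right boundary of the complete binary tree of depth `D`. -/
def Br (D : ℕ) : Finset (List Bool) :=
  (Finset.range (D+1)).image (fun k => List.replicate k true)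

/-- The marginalisation dynamic-programming table (indexed from `n = 1`). -/
def M (S : Finset (List Bool × List Bool)) (Bl : Finset (List Bool))
    (w : ℕ → List Bool → ℝ) (mw : List Bool → ℝ) : ℕ → List Bool → ℝ
  | 0, _ => 0
  | 1, v => if v ∈ Bl then w 1 v * mw v else 0
  | (n+2), v => w (n+2) v * mw v *
      ∑ p ∈ S.filter (fun p => p.2 = v), M S Bl w mw (n+1) p.1

/-- The Viterbi-style max-product dynamic-programming table. -/
def Mstar (S : Finset (List Bool × List Bool)) (Bl : Finset (List Bool))
    (w : ℕ → List Bool → NNReal) (mw : List Bool → NNReal) : ℕ → List Bool → NNReal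
  | 0, _ => 0
  | 1, v => if v ∈ Bl then w 1 v * mw v else 0
  | (n+2), v => w (n+2) v * mw v *
      (S.filter (fun p => p.2 = v)).sup (fun p => Mstar S Bl w mw (n+1) p.1)

/-- The complete binary tree of depth `D`, as a full binary tree. -/
def completeTree : ℕ → FBT
  | 0 => leaf
  | (D+1) => node (completeTree D) (completeTree D)

end FBT

/-! A transition of `S (D + 1)` either appends the same root edge (the last entry of a
position) to a transition of `S D`, a step inside one subtree of the root, or jumps from the
right boundary of the left subtree to the left boundary of the right subtree. Since the root
edge can therefore only switch from `false` to `true`, a path from `Bl (D + 1)` to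
`Br (D + 1)` splits into a path of the left subtree followed by a path of the right subtree,
each again running from boundary to boundary, and induction on `D` reassembles the tree. -/

theorem List.isChain_iff_forall_mem_zip_tail {α : Type*} {R : α → α → Prop} {l : List α} :
    l.IsChain R ↔ ∀ a b, (a, b) ∈ l.zip l.tail → R a b := by
  induction l using List.twoStepInduction with
  | nil | singleton => simp
  | cons_cons x y l _ ih =>
    simp only [List.isChain_cons_cons, ih, List.tail_cons, List.zip_cons_cons, List.mem_cons,
      Prod.mk.injEq]
    grind

theorem List.mem_zip_tail_map {α β : Type*} (f : α → β) {l : List α} {a b : β} :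
    (a, b) ∈ (l.map f).zip (l.map f).tail ↔
      ∃ x y, (x, y) ∈ l.zip l.tail ∧ f x = a ∧ f y = b := by
  rw [← List.map_tail, List.zip_map, List.mem_map]
  simp [Prod.ext_iff]

theorem List.mem_zip_tail_append {α : Type*} {l₁ l₂ : List α} {a b : α} :
    (a, b) ∈ (l₁ ++ l₂).zip (l₁ ++ l₂).tail ↔
      (a, b) ∈ l₁.zip l₁.tail ∨ (a ∈ l₁.getLast? ∧ b ∈ l₂.head?) ∨
        (a, b) ∈ l₂.zip l₂.tail := by
  induction l₁ using List.twoStepInduction with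
  | nil => simp
  | singleton x => cases l₂ <;> simp [eq_comm]
  | cons_cons x y l _ ih =>
    simp only [List.cons_append, List.tail_cons, List.zip_cons_cons, List.mem_cons] at ih ⊢
    rw [ih]
    simp [or_assoc]

namespace FBT

theorem leaves_ne_nil : ∀ T : FBT, T.leaves ≠ []
  | leaf => by simp [leaves]
  | node a _ => by simp [leaves, leaves_ne_nil a]

theorem mem_trees_iff {T : FBT} {D : ℕ} : T ∈ trees D ↔ T.depth ≤ D := by
  induction D generalizing T with
  | zero => cases T <;> simp [trees, depth]
  | succ D ih =>
    cases T with
    | leaf => simp [trees, depth]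
    | node a b => simp [trees, depth, ih]

theorem leaf_mem_trees {D : ℕ} : leaf ∈ trees D := by
  simp [mem_trees_iff, depth]

theorem node_mem_trees_succ {a b : FBT} {D : ℕ} :
    node a b ∈ trees (D + 1) ↔ a ∈ trees D ∧ b ∈ trees D := by
  simp [mem_trees_iff, depth]

theorem mem_Bl {p : List Bool} {D : ℕ} : p ∈ Bl D ↔ p.length ≤ D ∧ ∀ b ∈ p, b = false := by
  simp [Bl, List.eq_replicate_iff, eq_comm]

theorem mem_Br {p : List Bool} {D : ℕ} : p ∈ Br D ↔ p.length ≤ D ∧ ∀ b ∈ p, b = true := by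
  simp [Br, List.eq_replicate_iff, eq_comm]

theorem Bl_mono : Monotone Bl := fun _ _ h _ hp =>
  mem_Bl.2 ⟨(mem_Bl.1 hp).1.trans h, (mem_Bl.1 hp).2⟩

theorem Br_mono : Monotone Br := fun _ _ h _ hp =>
  mem_Br.2 ⟨(mem_Br.1 hp).1.trans h, (mem_Br.1 hp).2⟩

theorem append_mem_Bl_succ {q : List Bool} {c : Bool} {D : ℕ} :
    q ++ [c] ∈ Bl (D + 1) ↔ c = false ∧ q ∈ Bl D := by
  simp [mem_Bl]
  tauto

theorem append_mem_Br_succ {q : List Bool} {c : Bool} {D : ℕ} :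
    q ++ [c] ∈ Br (D + 1) ↔ c = true ∧ q ∈ Br D := by
  simp [mem_Br]
  tauto

theorem eq_nil_of_mem_Bl_of_mem_Br {p : List Bool} {D : ℕ} (hl : p ∈ Bl D) (hr : p ∈ Br D) :
    p = [] := by
  rw [List.eq_nil_iff_forall_not_mem]
  intro b hb
  simpa [(mem_Bl.1 hl).2 b hb] using (mem_Br.1 hr).2 b hb

theorem head?_leaves_node (a b : FBT) :
    (node a b).leaves.head? = a.leaves.head?.map (· ++ [false]) := by
  simp [leaves, List.head?_append_of_ne_nil _ (List.map_eq_nil_iff.not.2 (leaves_ne_nil a))]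

theorem getLast?_leaves_node (a b : FBT) :
    (node a b).leaves.getLast? = b.leaves.getLast?.map (· ++ [true]) := by
  simp [leaves, List.getLast?_append_of_ne_nil _ (List.map_eq_nil_iff.not.2 (leaves_ne_nil b))]

theorem head?_leaves_mem_Bl : ∀ {T : FBT}, ∀ p ∈ T.leaves.head?, p ∈ Bl T.depth
  | leaf, p, hp => by simp_all [leaves, mem_Bl]
  | node a b, p, hp => by
    obtain ⟨q, hq, rfl⟩ := Option.mem_map.1 (head?_leaves_node a b ▸ hp)
    exact Bl_mono (by simp [depth]) (append_mem_Bl_succ.2 ⟨rfl, head?_leaves_mem_Bl q hq⟩)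

theorem getLast?_leaves_mem_Br : ∀ {T : FBT}, ∀ p ∈ T.leaves.getLast?, p ∈ Br T.depth
  | leaf, p, hp => by simp_all [leaves, mem_Br]
  | node a b, p, hp => by
    obtain ⟨q, hq, rfl⟩ := Option.mem_map.1 (getLast?_leaves_node a b ▸ hp)
    exact Br_mono (by simp [depth]) (append_mem_Br_succ.2 ⟨rfl, getLast?_leaves_mem_Br q hq⟩)

theorem exists_mem_trees_head?_eq {D : ℕ} {p : List Bool} (hp : p ∈ Bl D) :
    ∃ T ∈ trees D, T.leaves.head? = some p := by
  induction D generalizing p with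
  | zero => exact ⟨leaf, leaf_mem_trees, by simp_all [leaves, mem_Bl]⟩
  | succ D ih =>
    rcases p.eq_nil_or_concat with rfl | ⟨q, c, rfl⟩
    · exact ⟨leaf, leaf_mem_trees, rfl⟩
    obtain ⟨rfl, hq⟩ := append_mem_Bl_succ.1 (List.concat_eq_append ▸ hp)
    obtain ⟨T, hT, hhead⟩ := ih hq
    exact ⟨node T leaf, node_mem_trees_succ.2 ⟨hT, leaf_mem_trees⟩,
      by simp [head?_leaves_node, hhead]⟩

theorem exists_mem_trees_getLast?_eq {D : ℕ} {p : List Bool} (hp : p ∈ Br D) :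
    ∃ T ∈ trees D, T.leaves.getLast? = some p := by
  induction D generalizing p with
  | zero => exact ⟨leaf, leaf_mem_trees, by simp_all [leaves, mem_Br]⟩
  | succ D ih =>
    rcases p.eq_nil_or_concat with rfl | ⟨q, c, rfl⟩
    · exact ⟨leaf, leaf_mem_trees, rfl⟩
    obtain ⟨rfl, hq⟩ := append_mem_Br_succ.1 (List.concat_eq_append ▸ hp)
    obtain ⟨T, hT, hlast⟩ := ih hq
    exact ⟨node leaf T, node_mem_trees_succ.2 ⟨leaf_mem_trees, hT⟩,
      by simp [getLast?_leaves_node, hlast]⟩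

theorem mem_S_iff {D : ℕ} {u v : List Bool} :
    (u, v) ∈ S D ↔ ∃ T ∈ trees D, (u, v) ∈ T.leaves.zip T.leaves.tail := by
  simp [S, transitions]

theorem mem_zip_tail_leaves_node {a b : FBT} {u v : List Bool} :
    (u, v) ∈ (node a b).leaves.zip (node a b).leaves.tail ↔
      (∃ x y, (x, y) ∈ a.leaves.zip a.leaves.tail ∧ u = x ++ [false] ∧ v = y ++ [false]) ∨
      ((∃ x ∈ a.leaves.getLast?, u = x ++ [false]) ∧ ∃ y ∈ b.leaves.head?, v = y ++ [true]) ∨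
      (∃ x y, (x, y) ∈ b.leaves.zip b.leaves.tail ∧ u = x ++ [true] ∧ v = y ++ [true]) := by
  simp only [leaves, List.mem_zip_tail_append, List.mem_zip_tail_map, List.getLast?_map,
    List.head?_map, Option.mem_map, eq_comm]

theorem mem_S_succ_iff {D : ℕ} {u v : List Bool} :
    (u, v) ∈ S (D + 1) ↔
      (∃ c x y, (x, y) ∈ S D ∧ u = x ++ [c] ∧ v = y ++ [c]) ∨
      ((∃ x ∈ Br D, u = x ++ [false]) ∧ ∃ y ∈ Bl D, v = y ++ [true]) := by
  constructor
  · rw [mem_S_iff]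
    rintro ⟨_ | ⟨a, b⟩, hT, huv⟩
    · simp [leaves] at huv
    obtain ⟨ha, hb⟩ := node_mem_trees_succ.1 hT
    rcases mem_zip_tail_leaves_node.1 huv with
      ⟨x, y, hxy, rfl, rfl⟩ | ⟨⟨x, hx, rfl⟩, y, hy, rfl⟩ | ⟨x, y, hxy, rfl, rfl⟩
    · exact Or.inl ⟨false, x, y, mem_S_iff.2 ⟨a, ha, hxy⟩, rfl, rfl⟩
    · exact Or.inr ⟨⟨x, Br_mono (mem_trees_iff.1 ha) (getLast?_leaves_mem_Br x hx), rfl⟩,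
        y, Bl_mono (mem_trees_iff.1 hb) (head?_leaves_mem_Bl y hy), rfl⟩
    · exact Or.inl ⟨true, x, y, mem_S_iff.2 ⟨b, hb, hxy⟩, rfl, rfl⟩
  · rintro (⟨_ | _, x, y, hxy, rfl, rfl⟩ | ⟨⟨x, hx, rfl⟩, y, hy, rfl⟩) <;> rw [mem_S_iff]
    · obtain ⟨T, hT, hxy⟩ := mem_S_iff.1 hxy
      exact ⟨node T leaf, node_mem_trees_succ.2 ⟨hT, leaf_mem_trees⟩,
        mem_zip_tail_leaves_node.2 (Or.inl ⟨x, y, hxy, rfl, rfl⟩)⟩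
    · obtain ⟨T, hT, hxy⟩ := mem_S_iff.1 hxy
      exact ⟨node leaf T, node_mem_trees_succ.2 ⟨leaf_mem_trees, hT⟩,
        mem_zip_tail_leaves_node.2 (Or.inr (Or.inr ⟨x, y, hxy, rfl, rfl⟩))⟩
    · obtain ⟨A, hA, hlast⟩ := exists_mem_trees_getLast?_eq hx
      obtain ⟨B, hB, hhead⟩ := exists_mem_trees_head?_eq hy
      exact ⟨node A B, node_mem_trees_succ.2 ⟨hA, hB⟩,
        mem_zip_tail_leaves_node.2 (Or.inr (Or.inl ⟨⟨x, hlast, rfl⟩, y, hhead, rfl⟩))⟩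

theorem exists_eq_map_append_true_of_isChain {D : ℕ} :
    ∀ {q : List Bool} {t : List (List Bool)},
      ((q ++ [true]) :: t).IsChain (fun u v => (u, v) ∈ S (D + 1)) →
      ∃ R, t = R.map (· ++ [true]) ∧ (q :: R).IsChain (fun u v => (u, v) ∈ S D)
  | _, [], _ => ⟨[], rfl, List.isChain_singleton _⟩
  | q, y :: t, h => by
    obtain ⟨hqy, ht⟩ := List.isChain_cons_cons.1 h
    rcases mem_S_succ_iff.1 hqy with ⟨c, x, y', hxy, hq, rfl⟩ | ⟨⟨x, -, hq⟩, -⟩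
    · obtain ⟨rfl, rfl⟩ : q = x ∧ true = c := by simpa using hq
      obtain ⟨R, rfl, hR⟩ := exists_eq_map_append_true_of_isChain ht
      exact ⟨y' :: R, rfl, List.isChain_cons_cons.2 ⟨hxy, hR⟩⟩
    · simp at hq

theorem exists_eq_map_append_map_of_isChain {D : ℕ} :
    ∀ {q : List Bool} {t : List (List Bool)},
      ((q ++ [false]) :: t).IsChain (fun u v => (u, v) ∈ S (D + 1)) →
      (∀ p ∈ ((q ++ [false]) :: t).getLast?, p ∈ Br (D + 1)) →
      ∃ L R, t = L.map (· ++ [false]) ++ R.map (· ++ [true]) ∧ R ≠ [] ∧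
        (q :: L).IsChain (fun u v => (u, v) ∈ S D) ∧ R.IsChain (fun u v => (u, v) ∈ S D) ∧
        (∀ p ∈ (q :: L).getLast?, p ∈ Br D) ∧ ∀ p ∈ R.head?, p ∈ Bl D
  | q, [], _, hlast => absurd (append_mem_Br_succ.1 (hlast _ rfl)).1 (by simp)
  | q, y :: t, h, hlast => by
    obtain ⟨hqy, ht⟩ := List.isChain_cons_cons.1 h
    rcases mem_S_succ_iff.1 hqy with ⟨c, x, y', hxy, hq, rfl⟩ | ⟨⟨x, hx, hq⟩, y', hy', rfl⟩
    · obtain ⟨rfl, rfl⟩ : q = x ∧ false = c := by simpa using hq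
      obtain ⟨L, R, rfl, hR, hL, hRc, hLlast, hRhead⟩ :=
        exists_eq_map_append_map_of_isChain ht (by simpa [List.getLast?_cons_cons] using hlast)
      exact ⟨y' :: L, R, rfl, hR, List.isChain_cons_cons.2 ⟨hxy, hL⟩, hRc,
        by simpa [List.getLast?_cons_cons] using hLlast, hRhead⟩
    · obtain rfl : q = x := by simpa using hq
      obtain ⟨R, rfl, hR⟩ := exists_eq_map_append_true_of_isChain ht
      exact ⟨[], y' :: R, rfl, List.cons_ne_nil _ _, List.isChain_singleton _, hR,
        by simpa using hx, by simpa using hy'⟩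

theorem exists_mem_trees_leaves_eq :
    ∀ {D : ℕ} {vs : List (List Bool)}, vs ≠ [] → (∀ p ∈ vs.head?, p ∈ Bl D) →
      (∀ p ∈ vs.getLast?, p ∈ Br D) → vs.IsChain (fun u v => (u, v) ∈ S D) →
      ∃ T ∈ trees D, T.leaves = vs
  | _, [], hne, _, _, _ => absurd rfl hne
  | _, [x], _, hhead, hlast, _ =>
    ⟨leaf, leaf_mem_trees, by simp [leaves, eq_nil_of_mem_Bl_of_mem_Br (hhead x rfl) (hlast x rfl)]⟩
  | 0, _ :: _ :: _, _, _, _, h => by simp [S, trees, transitions, leaves] at h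
  | D + 1, x :: y :: t, _, hhead, hlast, h => by
    obtain ⟨q, c, rfl⟩ : ∃ q c, x = q ++ [c] := by
      rcases mem_S_succ_iff.1 (List.isChain_cons_cons.1 h).1 with
        ⟨c, q, -, -, rfl, -⟩ | ⟨⟨q, -, rfl⟩, -⟩ <;> exact ⟨q, _, rfl⟩
    obtain ⟨rfl, hq⟩ := append_mem_Bl_succ.1 (hhead _ rfl)
    obtain ⟨L, R, hLR, hR, hLc, hRc, hLlast, hRhead⟩ :=
      exists_eq_map_append_map_of_isChain h hlast
    have hRlast : ∀ p ∈ R.getLast?, p ∈ Br D := fun p hp =>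
      (append_mem_Br_succ.1 (hlast (p ++ [true])
        (by simp [hLR, List.getLast?_cons, List.getLast?_append, Option.mem_def.1 hp]))).2
    obtain ⟨A, hA, hAL⟩ :=
      exists_mem_trees_leaves_eq (List.cons_ne_nil _ _) (by simpa using hq) hLlast hLc
    obtain ⟨B, hB, hBR⟩ := exists_mem_trees_leaves_eq hR hRhead hRlast hRc
    exact ⟨node A B, node_mem_trees_succ.2 ⟨hA, hB⟩, by simp [leaves, hAL, hBR, hLR]⟩

end FBT

theorem stmt5_general (D : ℕ) :
    (∀ T ∈ FBT.trees D, 2 ≤ T.leaves.length →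
      (∀ u v : List Bool, (u, v) ∈ T.leaves.zip T.leaves.tail → (u, v) ∈ FBT.S D) ∧
      (∀ p, T.leaves.head? = some p → p ∈ FBT.Bl D) ∧
      (∀ p, T.leaves.getLast? = some p → p ∈ FBT.Br D)) ∧
    (∀ (N : ℕ) (vs : List (List Bool)), vs.length = N → 1 ≤ N →
      (∀ p, vs.head? = some p → p ∈ FBT.Bl D) →
      (∀ p, vs.getLast? = some p → p ∈ FBT.Br D) →
      (∀ u v : List Bool, (u, v) ∈ vs.zip vs.tail → (u, v) ∈ FBT.S D) →
      ∃ T ∈ FBT.trees D, T.leaves = vs) := by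
  refine ⟨fun T hT _ => ⟨fun u v huv => FBT.mem_S_iff.2 ⟨T, hT, huv⟩, ?_, ?_⟩,
    fun N vs hlen hN hhead hlast hpath => ?_⟩
  · exact fun p hp => FBT.Bl_mono (FBT.mem_trees_iff.1 hT) (FBT.head?_leaves_mem_Bl p hp)
  · exact fun p hp => FBT.Br_mono (FBT.mem_trees_iff.1 hT) (FBT.getLast?_leaves_mem_Br p hp)
  · exact FBT.exists_mem_trees_leaves_eq (List.ne_nil_of_length_pos (hlen ▸ hN)) hhead hlast
      (List.isChain_iff_forall_mem_zip_tail.2 hpath)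

/-- consecutive leaves of an internal tree form successive leaf
transitions (starting in the left boundary and ending in the right boundary),
and conversely every path of `N - 1` transitions from the left boundary to the
right boundary visits exactly the leaves, in order, of some internal tree with
`N` leaves. -/
theorem stmt5 (D : ℕ) (hD : 1 ≤ D) :
    (∀ T ∈ FBT.trees D, 2 ≤ T.leaves.length →
      (∀ u v : List Bool, (u, v) ∈ T.leaves.zip T.leaves.tail → (u, v) ∈ FBT.S D) ∧
      (∀ p, T.leaves.head? = some p → p ∈ FBT.Bl D) ∧
      (∀ p, T.leaves.getLast? = some p → p ∈ FBT.Br D)) ∧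
    (∀ (N : ℕ) (vs : List (List Bool)), vs.length = N → 1 ≤ N →
      (∀ p, vs.head? = some p → p ∈ FBT.Bl D) →
      (∀ p, vs.getLast? = some p → p ∈ FBT.Br D) →
      (∀ u v : List Bool, (u, v) ∈ vs.zip vs.tail → (u, v) ∈ FBT.S D) →
      ∃ T ∈ FBT.trees D, T.leaves = vs) :=
  stmt5_general D
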